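/- Let R be a Noetherian local domain that is not complete with respect to the m-adic topology. Then Hom_R(R̂, R) = 0; in particular R̂ is neither free nor finitely generated as an R-module. -/

import Mathlib

/-!
A linear form `f : R̂ → R` is determined by `c = f 1`: `x ↦ f x`, viewed in `R̂`, and `x ↦ c • x`
are `R`-linear, hence `m`-adically continuous, and agree on the dense image of `R`, so
`f x = c • x` in `R̂`. If `c = 0`, then `f = 0` because `R → R̂` is injective (Krull). If `c ≠ 0`,
then `c` is a nonzerodivisor on the flat `R`-module `R̂`, and `c • x ∈ R` already lies in `c R`
by Krull's intersection theorem for `R / c R`; hence `x ∈ R`, and `R` would be complete.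
A nonzero free module has a nonzero linear form, and a finite flat module over a local ring is free.
-/

open IsLocalRing

namespace AdicCompletion

variable {R : Type*} [CommRing R] {I : Ideal R}
  {M : Type*} [AddCommGroup M] [Module R M] {N : Type*} [AddCommGroup N] [Module R N]

theorem exists_sub_of_mem_pow_smul_top (hI : I.FG) (x : AdicCompletion I M) (n : ℕ) :
    ∃ m : M, x - of I M m ∈ (I ^ n • ⊤ : Submodule R (AdicCompletion I M)) := by
  obtain ⟨m, hm⟩ := Submodule.mkQ_surjective _ (x.val n)
  refine ⟨m, ?_⟩
  rw [pow_smul_top_eq_ker_eval hI, LinearMap.mem_ker, map_sub, eval_of, hm, eval_apply, sub_self]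

theorem mem_pow_smul_top_of_of_mem {n : ℕ} {m : M}
    (h : of I M m ∈ (I ^ n • ⊤ : Submodule R (AdicCompletion I M))) :
    m ∈ (I ^ n • ⊤ : Submodule R M) := by
  have := pow_smul_top_le_ker_eval I n h
  rwa [LinearMap.mem_ker, eval_of, Submodule.mkQ_apply, Submodule.Quotient.mk_eq_zero] at this

theorem linearMap_ext_of_fg [IsHausdorff I N] (hI : I.FG) {f g : AdicCompletion I M →ₗ[R] N}
    (h : f ∘ₗ of I M = g ∘ₗ of I M) : f = g := by
  refine LinearMap.ext fun x ↦ ?_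
  rw [← sub_eq_zero, ← LinearMap.sub_apply]
  refine IsHausdorff.haus ‹_› _ fun n ↦ SModEq.zero.mpr ?_
  obtain ⟨m, hm⟩ := exists_sub_of_mem_pow_smul_top hI x n
  have hfg : f (of I M m) = g (of I M m) := LinearMap.congr_fun h m
  convert Submodule.smul_top_le_comap_smul_top _ (f - g) hm using 1
  simp [hfg]

theorem of_comp_dual (hI : I.FG) (f : Module.Dual R (AdicCompletion I R)) :
    of I R ∘ₗ f = f (of I R 1) • LinearMap.id := by
  refine linearMap_ext_of_fg hI (LinearMap.ext fun r ↦ ?_)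
  have hr : of I R r = r • of I R 1 := by rw [← map_smul, smul_eq_mul, mul_one]
  show of I R (f (of I R r)) = f (of I R 1) • of I R r
  calc of I R (f (of I R r)) = of I R (r * f (of I R 1)) := by rw [hr, map_smul, smul_eq_mul]
    _ = f (of I R 1) • of I R r := by rw [mul_comm, ← smul_eq_mul, map_smul]

theorem dvd_of_of_eq_smul {c s : R} [IsHausdorff I (R ⧸ Ideal.span {c})] (hI : I.FG)
    {x : AdicCompletion I R} (h : of I R s = c • x) : c ∣ s := by
  rw [← Ideal.mem_span_singleton, ← Ideal.Quotient.eq_zero_iff_mem]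
  refine IsHausdorff.haus ‹_› _ fun n ↦ SModEq.zero.mpr ?_
  obtain ⟨m, hm⟩ := exists_sub_of_mem_pow_smul_top hI x n
  have hsm : s - c * m ∈ (I ^ n • ⊤ : Submodule R R) := by
    refine mem_pow_smul_top_of_of_mem ?_
    rw [map_sub, h, ← smul_eq_mul, map_smul, ← smul_sub]
    exact Submodule.smul_mem _ c hm
  have hmk : Ideal.Quotient.mk (Ideal.span {c}) s = Ideal.Quotient.mk _ (s - c * m) := by
    rw [Ideal.Quotient.eq, sub_sub_cancel]
    exact Ideal.mul_mem_right _ _ (Ideal.mem_span_singleton_self c)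
  rw [hmk]
  exact Submodule.smul_top_le_comap_smul_top _ (Submodule.mkQ _) hsm

theorem isAdicComplete_of_isSMulRegular_dual_apply [IsNoetherianRing R] [IsLocalRing R]
    (f : Module.Dual R (AdicCompletion (maximalIdeal R) R))
    (hf : IsSMulRegular R (f (of _ R 1))) : IsAdicComplete (maximalIdeal R) R := by
  have hI := (maximalIdeal R).fg_of_isNoetherianRing
  have hreg : IsSMulRegular (AdicCompletion (maximalIdeal R) R) (f (of _ R 1)) :=
    (isSMulRegular_algebraMap_iff _).mp hf.of_flat
  refine of_bijective_iff.mp ⟨of_injective _ R, fun x ↦ ?_⟩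
  have hx : of _ R (f x) = f (of _ R 1) • x := LinearMap.congr_fun (of_comp_dual hI f) x
  obtain ⟨t, ht⟩ := dvd_of_of_eq_smul hI hx
  refine ⟨t, hreg ?_⟩
  simp only [← hx, ht, ← smul_eq_mul, map_smul]

end AdicCompletion

open AdicCompletion

/-- Let `R` be a Noetherian local domain that is not `m`-adically complete. Then
`Hom_R(R̂, R) = 0`; in particular `R̂` is neither free nor finitely generated over `R`. -/
theorem hom_adicCompletion_eq_zero
    (R : Type*) [CommRing R] [IsNoetherianRing R] [IsLocalRing R] [IsDomain R]
    (hR : ¬ IsAdicComplete (maximalIdeal R) R) :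
    Subsingleton ((AdicCompletion (maximalIdeal R) R) →ₗ[R] R) ∧
    ¬ Module.Free R (AdicCompletion (maximalIdeal R) R) ∧
    ¬ Module.Finite R (AdicCompletion (maximalIdeal R) R) := by
  set I := maximalIdeal R
  have hdual : ∀ f : Module.Dual R (AdicCompletion I R), f = 0 := by
    intro f
    by_cases hc : f (of I R 1) = 0
    · refine LinearMap.ext fun x ↦ of_injective I R ?_
      simpa [hc] using LinearMap.congr_fun (of_comp_dual I.fg_of_isNoetherianRing f) x
    · exact absurd (isAdicComplete_of_isSMulRegular_dual_apply f (.of_ne_zero hc)) hR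
  have hnotFree : ¬ Module.Free R (AdicCompletion I R) := fun _ ↦
    have ⟨f, hf⟩ := Module.Projective.exists_dual_ne_zero R (one_ne_zero (α := AdicCompletion I R))
    hf (by rw [hdual f, LinearMap.zero_apply])
  exact ⟨⟨fun f g ↦ (hdual f).trans (hdual g).symm⟩, hnotFree,
    fun _ ↦ hnotFree Module.free_of_flat_of_isLocalRing⟩
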